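/- The k-core of a partition λ is well-defined: any two maximal sequences of removals of k-rim hooks from λ terminate at the same partition. -/

import Mathlib

open scoped Classical

/-- A function `ℕ → ℕ` representing a partition: weakly decreasing and eventually zero.
Row `i` (0-indexed) has `lam i` boxes. -/
def IsPartitionFun (lam : ℕ → ℕ) : Prop :=
  Antitone lam ∧ ∃ N, ∀ i ≥ N, lam i = 0

/-- The size `|λ|` of a partition function. -/
noncomputable def msize (lam : ℕ → ℕ) : ℕ := ∑ᶠ i, lam i

/-- The cells of the skew shape `λ − μ`. -/
def skewCells (lam mu : ℕ → ℕ) : Set (ℕ × ℕ) :=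
  {c | mu c.1 ≤ c.2 ∧ c.2 < lam c.1}

/-- Two cells are adjacent if they share an edge. -/
def AdjCell (c d : ℕ × ℕ) : Prop :=
  (c.1 = d.1 ∧ (c.2 + 1 = d.2 ∨ d.2 + 1 = c.2)) ∨
  (c.2 = d.2 ∧ (c.1 + 1 = d.1 ∨ d.1 + 1 = c.1))

/-- A set of cells is (edge-)connected. -/
def CellConnected (S : Set (ℕ × ℕ)) : Prop :=
  ∀ c ∈ S, ∀ d ∈ S, Relation.ReflTransGen (fun x y => x ∈ S ∧ y ∈ S ∧ AdjCell x y) c d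

/-- A set of cells contains no 2×2 block. -/
def NoSquare (S : Set (ℕ × ℕ)) : Prop :=
  ¬ ∃ i j : ℕ, (i, j) ∈ S ∧ (i + 1, j) ∈ S ∧ (i, j + 1) ∈ S ∧ (i + 1, j + 1) ∈ S

/-- `λ − μ` is a rim hook (border strip) of size `m`: both are partitions, `μ ⊆ λ`,
and the skew shape has `m` cells, is connected and contains no 2×2 block. -/
def IsRimHook (lam mu : ℕ → ℕ) (m : ℕ) : Prop :=
  IsPartitionFun lam ∧ IsPartitionFun mu ∧ (∀ i, mu i ≤ lam i) ∧
  (skewCells lam mu).ncard = m ∧ CellConnected (skewCells lam mu) ∧ NoSquare (skewCells lam mu)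

/-- The height of the skew shape `λ − μ`: one less than the number of occupied rows. -/
noncomputable def heightOf (lam mu : ℕ → ℕ) : ℕ := {i | mu i < lam i}.ncard - 1

/-- The irreducible character value `χ^λ_ρ` of the symmetric group, presented through
the (iterated) Murnaghan–Nakayama rule: remove rim hooks of sizes `ρ₁, ρ₂, …` in turn. -/
noncomputable def charMN : List ℕ → (ℕ → ℕ) → ℤ
  | [], lam => if ∀ i, lam i = 0 then 1 else 0
  | r :: rho, lam =>
      ∑ᶠ mu : {mu : ℕ → ℕ // IsRimHook lam mu r},
        (-1) ^ heightOf lam mu.1 * charMN rho mu.1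

/-- A list is a partition of `n`: weakly decreasing, positive parts, summing to `n`. -/
def IsPartitionList (rho : List ℕ) (n : ℕ) : Prop :=
  rho.Pairwise (· ≥ ·) ∧ (∀ r ∈ rho, 0 < r) ∧ rho.sum = n

/-- `γ` is a `k`-core of `λ`: reachable from `λ` by successive removals of `k`-rim hooks,
and admitting no further `k`-rim hook removal. -/
def IsCoreOf (k : ℕ) (lam gamma : ℕ → ℕ) : Prop :=
  Relation.ReflTransGen (fun a b => IsRimHook a b k) lam gamma ∧
  ¬ ∃ mu : ℕ → ℕ, IsRimHook gamma mu k

/-!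
Encode a partition `λ` by its beta-set `{λ_i - i}`, the bead positions of an abacus. Removing a
`k`-rim hook that spans rows `a, …, m` moves exactly one bead, from `λ_a - a` to the empty position
`λ_a - a - k`. Such a move preserves, for every residue `r` modulo `k` and every sufficiently small
`t`, the number of beads `≥ t` congruent to `r`. A partition without `k`-rim hooks has a bead set
closed under `x ↦ x - k`, so each residue class of its beads is a downward ray, and that ray is
determined by the eventual counts. Hence any two `k`-cores of `λ` have the same beads.
-/

def betaSeq (lam : ℕ → ℕ) (i : ℕ) : ℤ := lam i - i

def betaSet (lam : ℕ → ℕ) : Set ℤ := Set.range (betaSeq lam)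

section Beta

variable {lam mu : ℕ → ℕ}

lemma betaSeq_strictAnti (hl : Antitone lam) : StrictAnti (betaSeq lam) :=
  strictAnti_nat_of_succ_lt fun i => by
    have := hl (Nat.le_add_right i 1)
    simp only [betaSeq]
    push_cast
    omega

lemma eq_of_betaSet_eq (hl : Antitone lam) (hm : Antitone mu) (h : betaSet lam = betaSet mu) :
    lam = mu := by
  have hβ := ((betaSeq_strictAnti hl).dual_right.range_inj (betaSeq_strictAnti hm).dual_right).1
    (by rw [Set.range_comp, Set.range_comp, ← betaSet, ← betaSet, h])
  funext i
  have : betaSeq lam i = betaSeq mu i := congrFun hβ i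
  simp only [betaSeq] at this
  omega

lemma finite_betaSet_inter_Ici (hl : Antitone lam) (t : ℤ) : (betaSet lam ∩ Set.Ici t).Finite := by
  refine ((Set.finite_Iic (lam 0 - t).toNat).image (betaSeq lam)).subset ?_
  rintro _ ⟨⟨i, rfl⟩, hi⟩
  refine ⟨i, ?_, rfl⟩
  have := hl (Nat.zero_le i)
  simp only [Set.mem_Ici, betaSeq] at hi
  simp only [Set.mem_Iic]
  omega

lemma exists_betaSeq_succ_lt_lt_betaSeq (hl : Antitone lam) {a : ℕ} {v : ℤ}
    (hva : v < betaSeq lam a) (hv : v ∉ betaSet lam) :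
    ∃ m, a ≤ m ∧ betaSeq lam (m + 1) < v ∧ v < betaSeq lam m := by
  have hex : ∃ n, betaSeq lam n < v := ⟨(lam 0 - v + 1).toNat, by
    have := hl (Nat.zero_le (lam 0 - v + 1).toNat)
    simp only [betaSeq]
    omega⟩
  have hn := Nat.find_spec hex
  have han : a < Nat.find hex := by
    by_contra! h
    have := (betaSeq_strictAnti hl).antitone h
    omega
  refine ⟨Nat.find hex - 1, by omega, by rwa [Nat.sub_add_cancel (by omega)], ?_⟩
  have := Nat.find_min hex (show Nat.find hex - 1 < Nat.find hex by omega)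
  exact lt_of_le_of_ne (not_lt.1 this) fun h => hv ⟨_, h.symm⟩

lemma exists_isPartitionFun_betaSeq_eq {β : ℕ → ℤ} (hβ : StrictAnti β) {N : ℕ}
    (hN : ∀ i ≥ N, β i = -i) : ∃ mu, IsPartitionFun mu ∧ betaSeq mu = β := by
  have hanti : Antitone fun i => β i + i :=
    antitone_nat_of_succ_le fun i => by
      have := hβ (Nat.lt_add_one i)
      push_cast
      omega
  have hnonneg : ∀ i, 0 ≤ β i + i := fun i => by
    have := hanti (le_max_left i N)
    have := hN (max i N) (le_max_right i N)
    simp only at *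
    omega
  refine ⟨fun i => (β i + i).toNat,
    ⟨fun i j hij => Int.toNat_le_toNat (hanti hij), N, fun i hi => by simp [hN i hi]⟩,
    funext fun i => ?_⟩
  have := hnonneg i
  simp only [betaSeq]
  omega

end Beta

/-- Abacus move: the bead at `β a` slides to the free position `v`, where
`β (m + 1) < v < β m`, and the beads `β (a + 1), …, β m` shift down one index. -/
def moveBead (β : ℕ → ℤ) (a m : ℕ) (v : ℤ) (i : ℕ) : ℤ :=
  if i < a ∨ m < i then β i else if i < m then β (i + 1) else v

section MoveBead

variable {β : ℕ → ℤ} {a m : ℕ} {v : ℤ}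

lemma moveBead_strictAnti (hβ : StrictAnti β) (ham : a ≤ m) (hlo : β (m + 1) < v)
    (hhi : v < β m) : StrictAnti (moveBead β a m v) := by
  refine strictAnti_nat_of_succ_lt fun i => ?_
  have := hβ (Nat.lt_add_one i)
  have := hβ (Nat.lt_add_one (i + 1))
  unfold moveBead
  rcases eq_or_ne m (i + 1) with rfl | _
  · split_ifs <;> omega
  rcases eq_or_ne m i with rfl | _
  · split_ifs <;> omega
  split_ifs <;> omega

lemma range_moveBead (hβ : Function.Injective β) (ham : a ≤ m) (v : ℤ) :
    Set.range (moveBead β a m v) = insert v (Set.range β \ {β a}) := by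
  ext x
  simp only [Set.mem_range, Set.mem_insert_iff, Set.mem_sdiff, Set.mem_singleton_iff]
  constructor
  · rintro ⟨i, rfl⟩
    unfold moveBead
    split_ifs with h₁ h₂
    · exact Or.inr ⟨⟨i, rfl⟩, fun h => by have := hβ h; omega⟩
    · exact Or.inr ⟨⟨i + 1, rfl⟩, fun h => by have := hβ h; omega⟩
    · exact Or.inl rfl
  · rintro (rfl | ⟨⟨j, rfl⟩, hj⟩)
    · exact ⟨m, by rw [moveBead, if_neg (by omega), if_neg (by omega)]⟩
    by_cases hj' : j < a ∨ m < j
    · exact ⟨j, by simp [moveBead, hj']⟩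
    have hja : j ≠ a := by rintro rfl; exact hj rfl
    refine ⟨j - 1, ?_⟩
    rw [moveBead, if_neg (by omega), if_pos (by omega), Nat.sub_add_cancel (by omega)]

lemma sum_sub_moveBead (β : ℕ → ℤ) (ham : a ≤ m) (v : ℤ) :
    ∑ i ∈ Finset.Icc a m, (β i - moveBead β a m v i) = β a - v := by
  rw [← Finset.Ico_add_one_right_eq_Icc, Finset.sum_Ico_succ_top ham]
  have hsum : ∑ i ∈ Finset.Ico a m, (β i - moveBead β a m v i)
      = -∑ i ∈ Finset.Ico a m, (β (i + 1) - β i) := by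
    rw [← Finset.sum_neg_distrib]
    refine Finset.sum_congr rfl fun i hi => ?_
    rw [Finset.mem_Ico] at hi
    rw [moveBead, if_neg (by omega), if_pos hi.2]
    ring
  rw [hsum, Finset.sum_Ico_sub β ham, moveBead, if_neg (by omega), if_neg (by omega)]
  ring

end MoveBead

section SkewCells

variable {lam mu : ℕ → ℕ}

lemma mem_skewCells {i j : ℕ} : (i, j) ∈ skewCells lam mu ↔ mu i ≤ j ∧ j < lam i := Iff.rfl

lemma ncard_skewCells_eq_sum (s : Finset ℕ) (hs : ∀ i ∉ s, lam i ≤ mu i) :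
    (skewCells lam mu).ncard = ∑ i ∈ s, (lam i - mu i) := by
  have hcells : skewCells lam mu = ↑(s.biUnion fun i => {i} ×ˢ Finset.Ico (mu i) (lam i)) := by
    ext ⟨i, j⟩
    simp only [mem_skewCells, Finset.coe_biUnion, Finset.mem_coe, Set.mem_iUnion,
      Finset.mem_product, Finset.mem_singleton, Finset.mem_Ico, exists_prop]
    constructor
    · rintro ⟨h₁, h₂⟩
      exact ⟨i, by_contra fun hi => by have := hs i hi; omega, rfl, h₁, h₂⟩
    · rintro ⟨_, _, rfl, h⟩
      exact h
  rw [hcells, Set.ncard_coe_finset, Finset.card_biUnion]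
  · simp
  · intro i _ i' _ hii'
    simp only [Function.onFun, Finset.disjoint_left, Finset.mem_product, Finset.mem_singleton]
    rintro ⟨_, _⟩ ⟨rfl, -⟩ ⟨rfl, -⟩
    exact hii' rfl

end SkewCells

abbrev AdjIn (S : Set (ℕ × ℕ)) (c d : ℕ × ℕ) : Prop := c ∈ S ∧ d ∈ S ∧ AdjCell c d

section Paths

variable {S : Set (ℕ × ℕ)}

lemma AdjIn.symm {c d : ℕ × ℕ} (h : AdjIn S c d) : AdjIn S d c := by
  obtain ⟨hc, hd, hadj⟩ := h
  exact ⟨hd, hc, by unfold AdjCell at *; omega⟩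

lemma reflTransGen_adjIn_symm {c d : ℕ × ℕ} (h : Relation.ReflTransGen (AdjIn S) c d) :
    Relation.ReflTransGen (AdjIn S) d c :=
  Relation.ReflTransGen.mono (r := Function.swap (AdjIn S)) (fun _ _ => AdjIn.symm) _ _
    (Relation.ReflTransGen.swap _ _ h)

lemma exists_vertical_adj_of_reflTransGen {c d : ℕ × ℕ}
    (h : Relation.ReflTransGen (AdjIn S) c d) {i : ℕ} (hc : c.1 ≤ i) (hd : i < d.1) :
    ∃ j, (i, j) ∈ S ∧ (i + 1, j) ∈ S := by
  induction h with
  | refl => omega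
  | @tail e f _ hef ih =>
    by_cases he : i < e.1
    · exact ih he
    obtain ⟨heS, hfS, hadj⟩ := hef
    obtain ⟨e₁, e₂⟩ := e
    obtain ⟨f₁, f₂⟩ := f
    simp only [AdjCell] at he hd hadj
    obtain ⟨rfl, rfl⟩ : e₁ = i ∧ f₁ = i + 1 := by omega
    obtain rfl : e₂ = f₂ := by omega
    exact ⟨e₂, heS, hfS⟩

lemma reflTransGen_row {i lo hi : ℕ} (hS : ∀ j, lo ≤ j → j < hi → (i, j) ∈ S) {j j' : ℕ}
    (hj : lo ≤ j ∧ j < hi) (hj' : lo ≤ j' ∧ j' < hi) :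
    Relation.ReflTransGen (AdjIn S) (i, j) (i, j') := by
  have to_lo : ∀ j, lo ≤ j → j < hi → Relation.ReflTransGen (AdjIn S) (i, j) (i, lo) := by
    intro j hlo hhi
    induction j, hlo using Nat.le_induction with
    | base => rfl
    | succ j hj ih =>
      exact .head ⟨hS _ (by omega) hhi, hS _ hj (by omega), Or.inl ⟨rfl, Or.inr rfl⟩⟩
        (ih (by omega))
  exact (to_lo j hj.1 hj.2).trans (reflTransGen_adjIn_symm (to_lo j' hj'.1 hj'.2))

end Paths

/-- `λ − μ` is a border strip occupying exactly the rows `a, …, m`; `succ_eq` says that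
consecutive rows overlap in exactly one column. -/
structure IsBorderStripOn (lam mu : ℕ → ℕ) (a m : ℕ) : Prop where
  first_le_last : a ≤ m
  eq_of_lt_or_lt : ∀ i, i < a ∨ m < i → mu i = lam i
  succ_eq : ∀ i, a ≤ i → i < m → lam (i + 1) = mu i + 1
  lt_last : mu m < lam m

namespace IsBorderStripOn

variable {lam mu : ℕ → ℕ} {a m : ℕ}

lemma mu_lt (h : IsBorderStripOn lam mu a m) (hl : Antitone lam) {i : ℕ} (hai : a ≤ i)
    (him : i ≤ m) : mu i < lam i := by
  rcases lt_or_eq_of_le him with hi | rfl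
  · have := h.succ_eq i hai hi
    have := hl (Nat.le_add_right i 1)
    omega
  · exact h.lt_last

lemma mu_le (h : IsBorderStripOn lam mu a m) (hl : Antitone lam) (i : ℕ) : mu i ≤ lam i := by
  by_cases hi : i < a ∨ m < i
  · exact (h.eq_of_lt_or_lt i hi).le
  · exact (h.mu_lt hl (by omega) (by omega)).le

lemma mem_Icc_of_mem (h : IsBorderStripOn lam mu a m) {c : ℕ × ℕ} (hc : c ∈ skewCells lam mu) :
    a ≤ c.1 ∧ c.1 ≤ m := by
  by_contra hout
  have := h.eq_of_lt_or_lt c.1 (by omega)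
  have := hc.1
  have := hc.2
  omega

lemma noSquare (h : IsBorderStripOn lam mu a m) : NoSquare (skewCells lam mu) := by
  rintro ⟨i, j, h₀₀, h₁₀, -, h₁₁⟩
  have hi := h.mem_Icc_of_mem h₀₀
  have hi' := h.mem_Icc_of_mem h₁₀
  have := h.succ_eq i hi.1 (by simp only at hi'; omega)
  rw [mem_skewCells] at h₀₀ h₁₁
  omega

lemma reflTransGen_first (h : IsBorderStripOn lam mu a m) (hl : Antitone lam) {i j : ℕ}
    (hij : (i, j) ∈ skewCells lam mu) :
    Relation.ReflTransGen (AdjIn (skewCells lam mu)) (i, j) (a, mu a) := by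
  obtain ⟨hai, him⟩ := h.mem_Icc_of_mem hij
  simp only at hai him
  induction i, hai using Nat.le_induction generalizing j with
  | base =>
    exact reflTransGen_row (fun _ h₁ h₂ => mem_skewCells.2 ⟨h₁, h₂⟩) (mem_skewCells.1 hij)
      ⟨le_rfl, h.mu_lt hl le_rfl h.first_le_last⟩
  | succ i hai ih =>
    have hsucc := h.succ_eq i hai him
    have hrow := h.mu_lt hl (by omega : a ≤ i + 1) him
    have hi := h.mu_lt hl hai (by omega)
    -- the last cell of row `i + 1` lies directly below the first cell of row `i`
    have hstep : AdjIn (skewCells lam mu) (i + 1, mu i) (i, mu i) :=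
      ⟨mem_skewCells.2 ⟨by omega, by omega⟩, mem_skewCells.2 ⟨le_rfl, hi⟩,
        Or.inr ⟨rfl, Or.inr rfl⟩⟩
    rw [mem_skewCells] at hij
    exact (reflTransGen_row (fun _ h₁ h₂ => mem_skewCells.2 ⟨h₁, h₂⟩) hij ⟨by omega, by omega⟩).tail hstep
      |>.trans (ih (mem_skewCells.2 ⟨le_rfl, hi⟩) (by omega))

lemma cellConnected (h : IsBorderStripOn lam mu a m) (hl : Antitone lam) :
    CellConnected (skewCells lam mu) := fun ⟨_, _⟩ hc ⟨_, _⟩ hd =>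
  (h.reflTransGen_first hl hc).trans (reflTransGen_adjIn_symm (h.reflTransGen_first hl hd))

lemma betaSeq_eq (h : IsBorderStripOn lam mu a m) :
    betaSeq mu = moveBead (betaSeq lam) a m (betaSeq mu m) := by
  funext i
  unfold moveBead
  split_ifs with h₁ h₂
  · simp only [betaSeq, h.eq_of_lt_or_lt i h₁]
  · simp only [betaSeq, h.succ_eq i (by omega) h₂]
    push_cast
    ring
  · rw [show i = m by omega]

lemma betaSet_eq (h : IsBorderStripOn lam mu a m) (hl : Antitone lam) :
    betaSet mu = insert (betaSeq mu m) (betaSet lam \ {betaSeq lam a}) := by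
  have := range_moveBead (betaSeq_strictAnti hl).injective h.first_le_last (betaSeq mu m)
  rwa [← h.betaSeq_eq] at this

lemma betaSeq_notMem_betaSet (h : IsBorderStripOn lam mu a m) (hl : Antitone lam)
    (hm : Antitone mu) : betaSeq mu m ∉ betaSet lam := by
  have hlo : betaSeq lam (m + 1) < betaSeq mu m := by
    have := (betaSeq_strictAnti hm) (Nat.lt_add_one m)
    rwa [betaSeq, h.eq_of_lt_or_lt (m + 1) (by omega)] at this
  have hhi : betaSeq mu m < betaSeq lam m := by
    have := h.lt_last
    simp only [betaSeq]
    omega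
  rintro ⟨j, hj⟩
  rcases le_or_gt j m with hjm | hjm
  · have := (betaSeq_strictAnti hl).antitone hjm
    omega
  · have := (betaSeq_strictAnti hl).antitone (by omega : m + 1 ≤ j)
    omega

lemma ncard_skewCells (h : IsBorderStripOn lam mu a m) (hl : Antitone lam) :
    ((skewCells lam mu).ncard : ℤ) = betaSeq lam a - betaSeq mu m := by
  rw [ncard_skewCells_eq_sum (Finset.Icc a m) fun i hi =>
      (h.eq_of_lt_or_lt i (by simp only [Finset.mem_Icc] at hi; omega)).ge, Nat.cast_sum]
  conv_rhs => rw [← sum_sub_moveBead (betaSeq lam) h.first_le_last, ← h.betaSeq_eq]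
  refine Finset.sum_congr rfl fun i _ => ?_
  have := h.mu_le hl i
  simp only [betaSeq]
  omega

lemma isRimHook (h : IsBorderStripOn lam mu a m) (hl : IsPartitionFun lam)
    (hm : IsPartitionFun mu) {k : ℕ} (hk : (k : ℤ) = betaSeq lam a - betaSeq mu m) :
    IsRimHook lam mu k :=
  ⟨hl, hm, h.mu_le hl.1, by rw [← Nat.cast_inj (R := ℤ), h.ncard_skewCells hl.1, hk],
    h.cellConnected hl.1, h.noSquare⟩

end IsBorderStripOn

lemma isBorderStripOn_of_betaSeq_eq {lam mu : ℕ → ℕ} {a m : ℕ} {v : ℤ}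
    (h : betaSeq mu = moveBead (betaSeq lam) a m v) (ham : a ≤ m) (hv : v < betaSeq lam m) :
    IsBorderStripOn lam mu a m where
  first_le_last := ham
  eq_of_lt_or_lt i hi := by
    have := congrFun h i
    simp only [moveBead, if_pos hi, betaSeq] at this
    omega
  succ_eq i h₁ h₂ := by
    have := congrFun h i
    rw [moveBead, if_neg (by omega), if_pos h₂] at this
    simp only [betaSeq] at this
    push_cast at this
    omega
  lt_last := by
    have := congrFun h m
    rw [moveBead, if_neg (by omega), if_neg (by omega)] at this
    simp only [betaSeq] at this hv
    omega

section RimHook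

variable {lam mu : ℕ → ℕ} {k : ℕ}

lemma IsRimHook.exists_isBorderStripOn (h : IsRimHook lam mu k) (hk : k ≠ 0) :
    ∃ a m, IsBorderStripOn lam mu a m := by
  obtain ⟨⟨hl, N, hN⟩, ⟨hm, -⟩, hle, hcard, hconn, hsq⟩ := h
  set rows := {i | mu i < lam i}
  have hfin : rows.Finite := (Set.finite_Iio N).subset fun i (hi : mu i < lam i) =>
    Set.mem_Iio.2 (by by_contra hiN; have := hN i (by omega); omega)
  obtain ⟨c, hc⟩ := Set.nonempty_of_ncard_ne_zero (hcard ▸ hk)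
  have hne : rows.Nonempty := ⟨c.1, lt_of_le_of_lt hc.1 hc.2⟩
  obtain ⟨a, ha, hmin⟩ := Set.exists_min_image rows id hfin hne
  obtain ⟨m, hm', hmax⟩ := Set.exists_max_image rows id hfin hne
  have hpath := hconn (a, mu a) ⟨le_rfl, ha⟩ (m, mu m) ⟨le_rfl, hm'⟩
  refine ⟨a, m, hmin m hm', fun i hi => ?_, fun i hai him => ?_, hm'⟩
  · by_contra hne
    have hi' : i ∈ rows := lt_of_le_of_ne (hle i) hne
    have := hmin i hi'
    have := hmax i hi'
    simp only [id] at *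
    omega
  · obtain ⟨j, hj, hj'⟩ := exists_vertical_adj_of_reflTransGen hpath hai him
    rw [mem_skewCells] at hj hj'
    have := hl (Nat.le_add_right i 1)
    have := hm (Nat.le_add_right i 1)
    -- two cells of row `i + 1` above `mu i` would close a 2×2 block with row `i`
    refine le_antisymm (not_lt.1 fun hgt => hsq ⟨i, mu i, ?_⟩) (by omega)
    simp only [mem_skewCells]
    omega

lemma IsRimHook.betaSet_eq_image_swap (h : IsRimHook lam mu k) (hk : k ≠ 0) :
    ∃ b : ℤ, betaSet mu = Equiv.swap b (b - k) '' betaSet lam := by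
  obtain ⟨a, m, hs⟩ := h.exists_isBorderStripOn hk
  have hsize : (k : ℤ) = betaSeq lam a - betaSeq mu m := h.2.2.2.1 ▸ hs.ncard_skewCells h.1.1
  refine ⟨betaSeq lam a, ?_⟩
  rw [show betaSeq lam a - k = betaSeq mu m by omega,
    (Equiv.swap_bijOn_exchange (s := betaSet lam) (Set.mem_range_self a) (hs.betaSeq_notMem_betaSet h.1.1 h.2.1.1)).image_eq,
    hs.betaSet_eq h.1.1]

lemma exists_isRimHook_of_sub_notMem_betaSet (hl : IsPartitionFun lam) (hk : k ≠ 0) {x : ℤ}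
    (hx : x ∈ betaSet lam) (hxk : x - k ∉ betaSet lam) : ∃ mu, IsRimHook lam mu k := by
  obtain ⟨a, rfl⟩ := hx
  obtain ⟨m, ham, hlo, hhi⟩ :=
    exists_betaSeq_succ_lt_lt_betaSeq hl.1 (by omega : betaSeq lam a - k < betaSeq lam a) hxk
  obtain ⟨N, hN⟩ := hl.2
  obtain ⟨mu, hm, hmu⟩ := exists_isPartitionFun_betaSeq_eq
    (moveBead_strictAnti (betaSeq_strictAnti hl.1) ham hlo hhi) (N := max N (m + 1))
    fun i hi => by simp [moveBead, betaSeq, hN i (by omega), show m < i by omega]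
  refine ⟨mu, (isBorderStripOn_of_betaSeq_eq hmu ham hhi).isRimHook hl hm ?_⟩
  rw [congrFun hmu m, moveBead, if_neg (by omega), if_neg (by omega)]
  ring

lemma isPartitionFun_of_reflTransGen {gamma : ℕ → ℕ} (hl : IsPartitionFun lam)
    (h : Relation.ReflTransGen (fun a b => IsRimHook a b k) lam gamma) : IsPartitionFun gamma := by
  rcases h.cases_tail with rfl | ⟨_, _, hstep⟩
  · exact hl
  · exact hstep.2.1

end RimHook

noncomputable def classCount (k : ℕ) (S : Set ℤ) (r t : ℤ) : ℕ :=
  {x ∈ S | t ≤ x ∧ x ≡ r [ZMOD k]}.ncard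

section ClassCount

open Filter

variable {k : ℕ}

lemma classCount_image_swap (S : Set ℤ) (b r : ℤ) :
    classCount k (Equiv.swap b (b - k) '' S) r =ᶠ[atBot] classCount k S r := by
  filter_upwards [eventually_le_atBot (b - k)] with t ht
  set σ := Equiv.swap b (b - k)
  have hmod : b - k ≡ b [ZMOD k] := Int.modEq_iff_dvd.2 (by simp)
  have hσ : ∀ y, (t ≤ σ y ∧ σ y ≡ r [ZMOD k]) ↔ (t ≤ y ∧ y ≡ r [ZMOD k]) := by
    intro y
    rw [Equiv.swap_apply_def]
    split_ifs with h₁ h₂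
    · subst h₁
      exact and_congr (by omega) ⟨hmod.symm.trans, hmod.trans⟩
    · subst h₂
      exact and_congr (by omega) ⟨hmod.trans, hmod.symm.trans⟩
    · rfl
  have hset : {x ∈ σ '' S | t ≤ x ∧ x ≡ r [ZMOD k]} = σ '' {x ∈ S | t ≤ x ∧ x ≡ r [ZMOD k]} := by
    ext y
    constructor
    · rintro ⟨⟨x, hx, rfl⟩, hP⟩
      exact ⟨x, ⟨hx, (hσ x).1 hP⟩, rfl⟩
    · rintro ⟨x, ⟨hx, hP⟩, rfl⟩
      exact ⟨⟨x, hx, rfl⟩, (hσ x).2 hP⟩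
  rw [classCount, classCount, hset, Set.ncard_image_of_injective _ σ.injective]

lemma classCount_betaSet_eventuallyEq {lam gamma : ℕ → ℕ} (hk : k ≠ 0)
    (h : Relation.ReflTransGen (fun a b => IsRimHook a b k) lam gamma) (r : ℤ) :
    classCount k (betaSet gamma) r =ᶠ[atBot] classCount k (betaSet lam) r := by
  induction h with
  | refl => rfl
  | tail _ hstep ih =>
    obtain ⟨b, hb⟩ := hstep.betaSet_eq_image_swap hk
    rw [hb]
    exact (classCount_image_swap _ b r).trans ih

lemma sub_mul_mem {T : Set ℤ} (hT : ∀ x ∈ T, x - k ∈ T) {x : ℤ} (hx : x ∈ T) (j : ℕ) :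
    x - j * k ∈ T := by
  induction j with
  | zero => simpa
  | succ j ih =>
    convert hT _ ih using 1
    push_cast
    ring

lemma le_classCount_of_mem (hk : k ≠ 0) {T : Set ℤ} (hT : ∀ x ∈ T, x - k ∈ T)
    (hfin : ∀ t, (T ∩ Set.Ici t).Finite) {x : ℤ} (hx : x ∈ T) (J : ℕ) :
    J + 1 ≤ classCount k T x (x - J * k) := by
  have hinj : Function.Injective fun j : ℕ => x - j * k := fun i j hij => by
    have : (i : ℤ) * k = j * k := by simp only at hij; omega
    exact_mod_cast mul_right_cancel₀ (by exact_mod_cast hk) this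
  have hsub : ((Finset.range (J + 1)).image fun j : ℕ => x - j * k : Set ℤ) ⊆
      {y ∈ T | x - J * k ≤ y ∧ y ≡ x [ZMOD k]} := by
    intro y hy
    simp only [Finset.coe_image, Finset.coe_range, Set.mem_image, Set.mem_Iio] at hy
    obtain ⟨j, hj, rfl⟩ := hy
    refine ⟨sub_mul_mem hT hx j, ?_, Int.modEq_iff_dvd.2 ⟨j, by ring⟩⟩
    have : (j : ℤ) * k ≤ J * k := by gcongr; omega
    omega
  calc J + 1 = ((Finset.range (J + 1)).image fun j : ℕ => x - j * k).card := by
        rw [Finset.card_image_of_injective _ hinj, Finset.card_range]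
    _ ≤ classCount k T x (x - J * k) := by
        rw [← Set.ncard_coe_finset]
        exact Set.ncard_le_ncard hsub ((hfin (x - J * k)).subset fun y hy => ⟨hy.1, hy.2.1⟩)

lemma classCount_le_of_notMem (hk : k ≠ 0) {T : Set ℤ} (hT : ∀ x ∈ T, x - k ∈ T) {x : ℤ}
    (hx : x ∉ T) (J : ℕ) : classCount k T x (x - J * k) ≤ J := by
  have hsub : {y ∈ T | x - J * k ≤ y ∧ y ≡ x [ZMOD k]} ⊆
      ((Finset.Icc 1 J).image fun j : ℕ => x - j * k : Set ℤ) := by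
    rintro y ⟨hy, hty, hyx⟩
    obtain ⟨d, hd⟩ := hyx.dvd
    -- `y ≥ x` would put `x = y - d * k` into `T`
    have hd1 : 1 ≤ d := by
      by_contra! hd0
      have hmem := sub_mul_mem hT hy (-d).toNat
      rw [Int.toNat_of_nonneg (by omega)] at hmem
      exact hx (by convert hmem using 1; linarith)
    have hdJ : d ≤ J := Int.le_of_mul_le_mul_left (a := k) (by linarith) (by omega)
    simp only [Finset.coe_image, Finset.coe_Icc, Set.mem_image, Set.mem_Icc]
    exact ⟨d.toNat, by omega, by rw [Int.toNat_of_nonneg (by omega)]; linarith⟩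
  calc classCount k T x (x - J * k) ≤ ((Finset.Icc 1 J).image fun j : ℕ => x - j * k).card := by
        rw [← Set.ncard_coe_finset]
        exact Set.ncard_le_ncard hsub
    _ ≤ J := Finset.card_image_le.trans (by simp)

lemma subset_of_classCount_eventuallyEq (hk : k ≠ 0) {T T' : Set ℤ} (hT : ∀ x ∈ T, x - k ∈ T)
    (hT' : ∀ x ∈ T', x - k ∈ T') (hfin : ∀ t, (T ∩ Set.Ici t).Finite)
    (h : ∀ r, classCount k T r =ᶠ[atBot] classCount k T' r) : T ⊆ T' := by
  intro x hx
  by_contra hx'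
  obtain ⟨t₀, ht₀⟩ := eventually_atBot.1 (h x)
  set J := (x - t₀).toNat
  have : (J : ℤ) ≤ J * k := le_mul_of_one_le_right (by omega) (by omega)
  have := ht₀ (x - J * k) (by omega)
  have := le_classCount_of_mem hk hT hfin hx J
  have := classCount_le_of_notMem hk hT' hx' J
  omega

end ClassCount

/-- The `k`-core of a partition is well-defined: any two maximal sequences of removals
of `k`-rim hooks from `λ` terminate at the same partition. -/
theorem core_well_defined (k : ℕ) (hk : 1 ≤ k) (lam gamma gamma' : ℕ → ℕ)
    (hlam : IsPartitionFun lam)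
    (h : IsCoreOf k lam gamma) (h' : IsCoreOf k lam gamma') : gamma = gamma' := by
  have hk : k ≠ 0 := by omega
  obtain ⟨hreach, hcore⟩ := h
  obtain ⟨hreach', hcore'⟩ := h'
  have hp := isPartitionFun_of_reflTransGen hlam hreach
  have hp' := isPartitionFun_of_reflTransGen hlam hreach'
  have hclosed : ∀ x ∈ betaSet gamma, x - k ∈ betaSet gamma := fun x hx =>
    by_contra fun hxk => hcore (exists_isRimHook_of_sub_notMem_betaSet hp hk hx hxk)
  have hclosed' : ∀ x ∈ betaSet gamma', x - k ∈ betaSet gamma' := fun x hx =>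
    by_contra fun hxk => hcore' (exists_isRimHook_of_sub_notMem_betaSet hp' hk hx hxk)
  have hcount r : classCount k (betaSet gamma) r =ᶠ[Filter.atBot] classCount k (betaSet gamma') r :=
    (classCount_betaSet_eventuallyEq hk hreach r).trans
      (classCount_betaSet_eventuallyEq hk hreach' r).symm
  exact eq_of_betaSet_eq hp.1 hp'.1 <| subset_antisymm
    (subset_of_classCount_eventuallyEq hk hclosed hclosed' (finite_betaSet_inter_Ici hp.1) hcount)
    (subset_of_classCount_eventuallyEq hk hclosed' hclosed (finite_betaSet_inter_Ici hp'.1)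
      fun r => (hcount r).symm)
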